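/- arXiv:1706.07510 — 2 statements merged into one kernel-verified Lean document; each statement's English description precedes it below -/
import Mathlib

section
/- Assume there are k ≥ 3 clusters and every cluster has size at least r. Any deterministic nonadaptive algorithm that always recovers the clustering exactly, even with a perfect (noiseless) same-cluster oracle, must make more than n²/(4r) queries. -/
open Finset

/-- Among subsets of `s` of size `t`, one with minimal `f`-sum has average bounded
by the overall average. -/
private lemma min_sum_subset {α : Type*} [DecidableEq α] (s : Finset α) (f : α → ℕ) (t : ℕ)
    (ht : t ≤ s.card) :
    ∃ X, X ⊆ s ∧ X.card = t ∧ (∑ x ∈ X, f x) * s.card ≤ t * ∑ x ∈ s, f x := by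
  obtain ⟨X, hXmem, hXmin⟩ :=
    Finset.exists_min_image (s.powersetCard t) (fun Y => ∑ x ∈ Y, f x)
      (Finset.powersetCard_nonempty.2 ht)
  rw [Finset.mem_powersetCard] at hXmem
  obtain ⟨hXs, hXcard⟩ := hXmem
  refine ⟨X, hXs, hXcard, ?_⟩
  have hex : ∀ x ∈ X, ∀ y ∈ s \ X, f x ≤ f y := by
    intro x hx y hy
    by_contra hlt
    push_neg at hlt
    have hy' := Finset.mem_sdiff.1 hy
    have hyerase : y ∉ X.erase x := fun h => hy'.2 (Finset.mem_of_mem_erase h)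
    have ht0 : 0 < t := hXcard ▸ Finset.card_pos.2 ⟨x, hx⟩
    have hmem : insert y (X.erase x) ∈ s.powersetCard t := by
      rw [Finset.mem_powersetCard]
      constructor
      · intro z hz
        rcases Finset.mem_insert.1 hz with h | h
        · exact h ▸ hy'.1
        · exact hXs (Finset.mem_of_mem_erase h)
      · rw [Finset.card_insert_of_notMem hyerase, Finset.card_erase_of_mem hx, hXcard]
        omega
    have hx_add : f x + ∑ z ∈ X.erase x, f z = ∑ z ∈ X, f z := Finset.add_sum_erase X f hx
    have hsum : ∑ z ∈ insert y (X.erase x), f z < ∑ z ∈ X, f z := by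
      rw [Finset.sum_insert hyerase]
      omega
    have := hXmin _ hmem
    omega
  have hstep : ∀ x ∈ X, f x * (s \ X).card ≤ ∑ y ∈ s \ X, f y := by
    intro x hx
    calc f x * (s \ X).card = ∑ _y ∈ s \ X, f x := by
          rw [Finset.sum_const, smul_eq_mul, mul_comm]
      _ ≤ ∑ y ∈ s \ X, f y := Finset.sum_le_sum (fun y hy => hex x hx y hy)
  have h2 : (∑ x ∈ X, f x) * (s \ X).card ≤ t * ∑ y ∈ s \ X, f y := by
    calc (∑ x ∈ X, f x) * (s \ X).card = ∑ x ∈ X, f x * (s \ X).card := by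
          rw [Finset.sum_mul]
      _ ≤ ∑ _x ∈ X, ∑ y ∈ s \ X, f y := Finset.sum_le_sum hstep
      _ = t * ∑ y ∈ s \ X, f y := by rw [Finset.sum_const, smul_eq_mul, hXcard]
  have hcards : (s \ X).card + X.card = s.card := Finset.card_sdiff_add_card_eq_card hXs
  have hsums : (∑ y ∈ s \ X, f y) + ∑ x ∈ X, f x = ∑ x ∈ s, f x := Finset.sum_sdiff hXs
  calc (∑ x ∈ X, f x) * s.card
      = (∑ x ∈ X, f x) * (s \ X).card + (∑ x ∈ X, f x) * X.card := by
        rw [← Nat.mul_add, hcards]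
    _ ≤ t * (∑ y ∈ s \ X, f y) + t * (∑ x ∈ X, f x) := by
        refine Nat.add_le_add h2 (le_of_eq ?_)
        rw [hXcard, Nat.mul_comm]
    _ = t * ∑ x ∈ s, f x := by rw [← Nat.mul_add, hsums]

set_option maxHeartbeats 1600000 in
/-- Key arithmetic estimate: degree sum of the chosen set is at most `n - 2r`. -/
private lemma claimG (n r m β p t N S T : ℕ) (hr : 1 ≤ r) (hn : 3*r ≤ n)
    (hm : 4*r*m ≤ n^2) (hβ : β < r) (hp : p ≤ β) (ht : t + β = r) (hN : N + β = n)
    (hTp : p + T = 2*m) (hTN : 2*N ≤ T) (hS : S*N ≤ t*T) : p + S ≤ n - 2*r := by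
  have hN0 : 0 < N := by omega
  have main : p * N + t * T ≤ (n - 2*r) * N := by
    have hrn : r ≤ n := by omega
    have h2r : 2*r ≤ n := by omega
    have hp2m : p ≤ 2*m := by omega
    have hNe : N = n - r + t := by omega
    have hTe : T = 2*m - p := by omega
    rw [hNe, hTe, ← @Nat.cast_le ℝ]
    have c0 : ((n - r : ℕ) : ℝ) = (n:ℝ) - r := by
      rw [Nat.cast_sub hrn]
    have c2 : ((2*m - p : ℕ) : ℝ) = 2*(m:ℝ) - p := by
      rw [Nat.cast_sub hp2m]; push_cast; ring
    have c3 : ((n - 2*r : ℕ) : ℝ) = (n:ℝ) - 2*r := by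
      rw [Nat.cast_sub h2r]; push_cast; ring
    push_cast [c0, c2, c3]
    -- real goal: ↑p * (↑n - ↑r + ↑t) + ↑t * (2↑m - ↑p) ≤ (↑n - 2↑r) * (↑n - ↑r + ↑t)
    have e6 : 4*(r:ℝ)*m ≤ (n:ℝ)^2 := by exact_mod_cast hm
    have e7 : 3*(r:ℝ) ≤ n := by exact_mod_cast hn
    have e8 : 1 ≤ (r:ℝ) := by exact_mod_cast hr
    have e5 : (p:ℝ) ≤ r - t := by
      have h' : p + t ≤ r := by omega
      have h'' : (p:ℝ) + t ≤ r := by exact_mod_cast h'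
      linarith
    have e4 : 2*((n:ℝ) - r + t) ≤ 2*(m:ℝ) - p := by
      have h := hTN
      rw [hNe, hTe] at h
      have h' : ((2*(n - r + t) : ℕ):ℝ) ≤ ((2*m - p : ℕ):ℝ) := by exact_mod_cast h
      rw [c2] at h'
      calc 2*((n:ℝ) - r + t) = ((2*(n - r + t) : ℕ):ℝ) := by push_cast [c0]; ring
        _ ≤ _ := h'
    have et : (1:ℝ) ≤ t := by
      have h' : 1 ≤ t := by omega
      exact_mod_cast h'
    have etr : (t:ℝ) ≤ r := by
      have h' : t ≤ r := by omega
      exact_mod_cast h'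
    have enr : (0:ℝ) ≤ (n:ℝ) - r := by linarith
    by_cases hcase : n ≤ 4*r
    · have e11 : (n:ℝ) ≤ 4*r := by exact_mod_cast hcase
      have h3 : 2*(m:ℝ) ≤ 3*n - 4*r := by
        nlinarith [mul_nonneg (by linarith : (0:ℝ) ≤ (n:ℝ) - 2*r)
          (by linarith : (0:ℝ) ≤ 4*(r:ℝ) - n)]
      nlinarith [mul_nonneg (by linarith : (0:ℝ) ≤ 2*(m:ℝ) - p - 2*((n:ℝ) - r + t)) enr,
                 mul_nonneg (by linarith : (0:ℝ) ≤ 3*(n:ℝ) - 4*r - 2*m)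
                   (by linarith : (0:ℝ) ≤ (n:ℝ) - r + t)]
    · push_neg at hcase
      have e12 : 4*(r:ℝ) ≤ n := by
        have h' : 4*r ≤ n := by omega
        exact_mod_cast h'
      have hQ1 : (0:ℝ) ≤ ((r:ℝ) - t) * (((n:ℝ) - 2*r)^2 + 2*(r:ℝ)^2) :=
        mul_nonneg (by linarith) (by positivity)
      have hQ2 : (0:ℝ) ≤ (r:ℝ)*n*((n:ℝ) - 4*r) :=
        mul_nonneg (by positivity) (by linarith)
      have hD1 : (0:ℝ) ≤ 2*(r:ℝ)*((n:ℝ) - r)*((r:ℝ) - t - p) :=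
        mul_nonneg (mul_nonneg (by linarith) enr) (by linarith)
      have hD2 : (0:ℝ) ≤ (t:ℝ)*((n:ℝ)^2 - 4*r*m) :=
        mul_nonneg (by positivity) (by linarith)
      have h2r0 : (0:ℝ) < 2*(r:ℝ) := by linarith
      refine le_of_mul_le_mul_left ?_ h2r0
      nlinarith [hQ1, hQ2, hD1, hD2]
  have key : (p + S) * N ≤ (n - 2*r) * N := by
    calc (p + S) * N = p*N + S*N := by ring
      _ ≤ p*N + t*T := by omega
      _ ≤ (n - 2*r)*N := main
  exact Nat.le_of_mul_le_mul_right key hN0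

/-- Nonadaptive deterministic lower bound with a perfect oracle: if there are k ≥ 3
clusters and every (nonempty) cluster has size at least r, then any deterministic
nonadaptive algorithm—i.e., a fixed set Q of queried pairs together with a decoder
from the (noiseless) same-cluster answers on Q—that exactly recovers every such
clustering must make more than n²/(4r) queries. -/
theorem nonadaptive_turan_lower_bound (n k r : ℕ) (hk : 3 ≤ k) (hr : 0 < r)
    (hn : 3*r ≤ n)
    (Q : Finset (Fin n × Fin n)) (hQ : ∀ e ∈ Q, e.1 ≠ e.2)
    (dec : ({e // e ∈ Q} → Bool) → Fin n → Fin k)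
    (hcorrect : ∀ σ : Fin n → Fin k,
      (∀ j, (univ.filter (fun i => σ i = j)).card = 0 ∨
            r ≤ (univ.filter (fun i => σ i = j)).card) →
      ∀ i j, dec (fun e => decide (σ e.1.1 = σ e.1.2)) i
               = dec (fun e => decide (σ e.1.1 = σ e.1.2)) j ↔ σ i = σ j) :
    (n:ℝ)^2/(4*r) < (Q.card : ℝ) := by
  by_contra hcon
  push_neg at hcon
  have hr4 : (0:ℝ) < 4*r := by positivity
  have hQn : 4*r*Q.card ≤ n^2 := by
    have h1 : (Q.card : ℝ) * (4*r) ≤ (n:ℝ)^2 := (le_div_iff₀ hr4).1 hcon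
    have h2 : ((4*r*Q.card : ℕ):ℝ) ≤ ((n^2 : ℕ):ℝ) := by push_cast; linarith
    exact_mod_cast h2
  classical
  set G := SimpleGraph.fromRel (fun u v : Fin n => (u,v) ∈ Q) with hG
  haveI : DecidableRel G.Adj := fun a b => Classical.dec _
  set dg : Fin n → ℕ := fun v => G.degree v with hdg
  set m := G.edgeFinset.card with hm
  have hmQ : m ≤ Q.card := by
    apply Finset.card_le_card_of_surjOn (fun p : Fin n × Fin n => s(p.1, p.2))
    intro e he
    simp only [Finset.mem_coe, SimpleGraph.mem_edgeFinset] at he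
    induction e using Sym2.ind with
    | _ u v =>
      rw [SimpleGraph.mem_edgeSet, hG, SimpleGraph.fromRel_adj] at he
      rcases he.2 with h | h
      · exact ⟨(u,v), h, rfl⟩
      · exact ⟨(v,u), h, Sym2.eq_swap⟩
  have hm4 : 4*r*m ≤ n^2 := le_trans (Nat.mul_le_mul le_rfl hmQ) hQn
  have hhs : ∑ v, dg v = 2*m := by
    rw [hdg, hm]
    exact G.sum_degrees_eq_twice_card_edges
  set W := univ.filter (fun v : Fin n => dg v ≤ 1) with hW
  set nW := univ.filter (fun v : Fin n => ¬ dg v ≤ 1) with hnW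
  set β := W.card with hβdef
  set p := ∑ v ∈ W, dg v with hpdef
  set T := ∑ v ∈ nW, dg v with hTdef
  have hsplit : p + T = 2*m := by
    rw [hpdef, hTdef, hW, hnW,
      Finset.sum_filter_add_sum_filter_not univ (fun v => dg v ≤ 1) dg]
    exact hhs
  have hcardsplit : β + nW.card = n := by
    have h := Finset.card_filter_add_card_filter_not
      (s := (univ : Finset (Fin n))) (p := fun v => dg v ≤ 1)
    simpa [hW, hnW, card_univ] using h
  have hpβ : p ≤ β := by
    have h := Finset.sum_le_card_nsmul W dg 1
      (fun x hx => (Finset.mem_filter.1 hx).2)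
    simpa using h
  have hTnW : 2*nW.card ≤ T := by
    have h := Finset.card_nsmul_le_sum nW dg 2
      (fun v hv => by have := (Finset.mem_filter.1 hv).2; omega)
    simpa [mul_comm] using h
  -- find B of size r with small total degree
  have hBex : ∃ B : Finset (Fin n), B.card = r ∧ ∑ b ∈ B, dg b ≤ n - 2*r := by
    by_cases hβr : r ≤ β
    · obtain ⟨B, hBW, hBcard⟩ := Finset.exists_subset_card_eq (s := W) hβr
      refine ⟨B, hBcard, ?_⟩
      have h : ∑ x ∈ B, dg x ≤ B.card • 1 := Finset.sum_le_card_nsmul B dg 1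
        (fun x hx => (Finset.mem_filter.1 (hBW hx)).2)
      simp only [smul_eq_mul, mul_one, hBcard] at h
      omega
    · push_neg at hβr
      have htN : r - β ≤ nW.card := by omega
      obtain ⟨X, hXnW, hXcard, hXs⟩ := min_sum_subset nW dg (r - β) htN
      have hdisjWX : Disjoint W X :=
        Finset.disjoint_left.2 (fun a haW haX =>
          (Finset.mem_filter.1 (hXnW haX)).2 (Finset.mem_filter.1 haW).2)
      refine ⟨W ∪ X, ?_, ?_⟩
      · rw [Finset.card_union_of_disjoint hdisjWX, hXcard]
        omega
      · rw [Finset.sum_union hdisjWX]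
        exact claimG n r m β p (r - β) nW.card (∑ x ∈ X, dg x) T hr hn hm4 hβr hpβ
          (by omega) (by omega) hsplit hTnW (hXcard ▸ hXs)
  obtain ⟨B, hBcard, hBdeg⟩ := hBex
  set D := B.biUnion (fun b => G.neighborFinset b) with hD
  have hDcard : D.card ≤ n - 2*r := by
    calc D.card ≤ ∑ b ∈ B, (G.neighborFinset b).card := Finset.card_biUnion_le
      _ = ∑ b ∈ B, dg b := by
          refine Finset.sum_congr rfl (fun b _ => ?_)
          rfl
      _ ≤ n - 2*r := hBdeg
  have hAex : r ≤ (univ \ (B ∪ D)).card := by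
    have h1 : (B ∪ D).card ≤ B.card + D.card := Finset.card_union_le _ _
    have h2 : (univ \ (B ∪ D)).card = n - (B ∪ D).card := by
      rw [Finset.card_sdiff_of_subset (Finset.subset_univ _), card_univ, Fintype.card_fin]
    omega
  obtain ⟨A, hAsub, hAcard⟩ := Finset.exists_subset_card_eq hAex
  have hAB : ∀ a ∈ A, a ∉ B := by
    intro a ha hb
    have h := hAsub ha
    rw [Finset.mem_sdiff] at h
    exact h.2 (Finset.mem_union_left _ hb)
  have hAD : ∀ a ∈ A, a ∉ D := by
    intro a ha hd
    have h := hAsub ha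
    rw [Finset.mem_sdiff] at h
    exact h.2 (Finset.mem_union_right _ hd)
  have hcross : ∀ x y : Fin n, (x, y) ∈ Q → ¬(x ∈ A ∧ y ∈ B) ∧ ¬(x ∈ B ∧ y ∈ A) := by
    intro x y hxy
    have hadj : G.Adj x y := by
      rw [hG, SimpleGraph.fromRel_adj]
      exact ⟨hQ _ hxy, Or.inl hxy⟩
    constructor
    · rintro ⟨hxA, hyB⟩
      exact hAD x hxA (Finset.mem_biUnion.2
        ⟨y, hyB, (SimpleGraph.mem_neighborFinset _ _ _).2 hadj.symm⟩)
    · rintro ⟨hxB, hyA⟩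
      exact hAD y hyA (Finset.mem_biUnion.2
        ⟨x, hxB, (SimpleGraph.mem_neighborFinset _ _ _).2 hadj⟩)
  -- labels
  have h0k : 0 < k := by omega
  have h1k : 1 < k := by omega
  have h2k : 2 < k := by omega
  set l0 : Fin k := ⟨0, h0k⟩ with hl0def
  set l1 : Fin k := ⟨1, h1k⟩ with hl1def
  set l2 : Fin k := ⟨2, h2k⟩ with hl2def
  have hl01 : l0 ≠ l1 := by simp [hl0def, hl1def, Fin.ext_iff]
  have hl02 : l0 ≠ l2 := by simp [hl0def, hl2def, Fin.ext_iff]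
  have hl12 : l1 ≠ l2 := by simp [hl1def, hl2def, Fin.ext_iff]
  set σ1 : Fin n → Fin k := fun i => if i ∈ A then l0 else if i ∈ B then l1 else l2 with hσ1
  set σ2 : Fin n → Fin k := fun i => if i ∈ A then l0 else if i ∈ B then l0 else l2 with hσ2
  have hdisjAB : Disjoint A B := Finset.disjoint_left.2 hAB
  have restset : (univ \ (A ∪ B)).card = n - 2*r := by
    rw [Finset.card_sdiff_of_subset (Finset.subset_univ _), card_univ, Fintype.card_fin,
      Finset.card_union_of_disjoint hdisjAB, hAcard, hBcard]
    omega
  have hrrest : r ≤ n - 2*r := by omega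
  -- fibers of σ1
  have hfib1 : ∀ j, (univ.filter (fun i => σ1 i = j)).card = 0 ∨
      r ≤ (univ.filter (fun i => σ1 i = j)).card := by
    intro j
    by_cases hj0 : j = l0
    · right
      have hset : univ.filter (fun i => σ1 i = j) = A := by
        ext i
        simp only [Finset.mem_filter, Finset.mem_univ, true_and, hσ1, hj0]
        by_cases hiA : i ∈ A
        · simp [hiA]
        · by_cases hiB : i ∈ B
          · simp [hiA, hiB, hl01.symm]
          · simp [hiA, hiB, hl02.symm]
      rw [hset, hAcard]
    · by_cases hj1 : j = l1
      · right
        have hset : univ.filter (fun i => σ1 i = j) = B := by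
          ext i
          simp only [Finset.mem_filter, Finset.mem_univ, true_and, hσ1, hj1]
          by_cases hiA : i ∈ A
          · simp [hiA, hl01, hAB i hiA]
          · by_cases hiB : i ∈ B
            · simp [hiA, hiB]
            · simp [hiA, hiB, hl12.symm]
        rw [hset, hBcard]
      · by_cases hj2 : j = l2
        · right
          have hset : univ.filter (fun i => σ1 i = j) = univ \ (A ∪ B) := by
            ext i
            simp only [Finset.mem_filter, Finset.mem_univ, true_and, hσ1, hj2,
              Finset.mem_sdiff, Finset.mem_union]
            by_cases hiA : i ∈ A
            · simp [hiA, hl02]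
            · by_cases hiB : i ∈ B
              · simp [hiA, hiB, hl12]
              · simp [hiA, hiB]
          rw [hset, restset]
          exact hrrest
        · left
          rw [Finset.card_eq_zero, Finset.eq_empty_iff_forall_notMem]
          intro i hi
          have hv := (Finset.mem_filter.1 hi).2
          simp only [hσ1] at hv
          split_ifs at hv
          · exact hj0 hv.symm
          · exact hj1 hv.symm
          · exact hj2 hv.symm
  -- fibers of σ2
  have hfib2 : ∀ j, (univ.filter (fun i => σ2 i = j)).card = 0 ∨
      r ≤ (univ.filter (fun i => σ2 i = j)).card := by
    intro j
    by_cases hj0 : j = l0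
    · right
      have hset : univ.filter (fun i => σ2 i = j) = A ∪ B := by
        ext i
        simp only [Finset.mem_filter, Finset.mem_univ, true_and, hσ2, hj0,
          Finset.mem_union]
        by_cases hiA : i ∈ A
        · simp [hiA]
        · by_cases hiB : i ∈ B
          · simp [hiA, hiB]
          · simp [hiA, hiB, hl02.symm]
      rw [hset, Finset.card_union_of_disjoint hdisjAB, hAcard, hBcard]
      omega
    · by_cases hj2 : j = l2
      · right
        have hset : univ.filter (fun i => σ2 i = j) = univ \ (A ∪ B) := by
          ext i
          simp only [Finset.mem_filter, Finset.mem_univ, true_and, hσ2, hj2,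
            Finset.mem_sdiff, Finset.mem_union]
          by_cases hiA : i ∈ A
          · simp [hiA, hl02]
          · by_cases hiB : i ∈ B
            · simp [hiA, hiB, hl02]
            · simp [hiA, hiB]
        rw [hset, restset]
        exact hrrest
      · left
        rw [Finset.card_eq_zero, Finset.eq_empty_iff_forall_notMem]
        intro i hi
        have hv := (Finset.mem_filter.1 hi).2
        simp only [hσ2] at hv
        split_ifs at hv
        · exact hj0 hv.symm
        · exact hj0 hv.symm
        · exact hj2 hv.symm
  -- answer functions agree
  have hansEq : (fun e : {e // e ∈ Q} => decide (σ1 (e.1).1 = σ1 (e.1).2)) =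
      (fun e : {e // e ∈ Q} => decide (σ2 (e.1).1 = σ2 (e.1).2)) := by
    funext e
    obtain ⟨⟨x, y⟩, hxy⟩ := e
    simp only [decide_eq_decide]
    obtain ⟨hc1, hc2⟩ := hcross x y hxy
    simp only [hσ1, hσ2]
    by_cases hxA : x ∈ A <;> by_cases hyA : y ∈ A <;>
      by_cases hxB : x ∈ B <;> by_cases hyB : y ∈ B
    · exact absurd hxB (hAB _ hxA)
    · exact absurd hxB (hAB _ hxA)
    · exact absurd hyB (hAB _ hyA)
    · simp [hxA, hyA, hxB, hyB, hl01, hl02, hl12, hl01.symm, hl02.symm, hl12.symm]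
    · exact absurd hxB (hAB _ hxA)
    · exact absurd hxB (hAB _ hxA)
    · exact absurd ⟨hxA, hyB⟩ hc1
    · simp [hxA, hyA, hxB, hyB, hl01, hl02, hl12, hl01.symm, hl02.symm, hl12.symm]
    · exact absurd ⟨hxB, hyA⟩ hc2
    · exact absurd ⟨hxB, hyA⟩ hc2
    · exact absurd hyB (hAB _ hyA)
    · simp [hxA, hyA, hxB, hyB, hl01, hl02, hl12, hl01.symm, hl02.symm, hl12.symm]
    · simp [hxA, hyA, hxB, hyB, hl01, hl02, hl12, hl01.symm, hl02.symm, hl12.symm]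
    · simp [hxA, hyA, hxB, hyB, hl01, hl02, hl12, hl01.symm, hl02.symm, hl12.symm]
    · simp [hxA, hyA, hxB, hyB, hl01, hl02, hl12, hl01.symm, hl02.symm, hl12.symm]
    · simp [hxA, hyA, hxB, hyB, hl01, hl02, hl12, hl01.symm, hl02.symm, hl12.symm]
  -- final contradiction
  have hA0 : A.Nonempty := by rw [← Finset.card_pos, hAcard]; omega
  have hB0 : B.Nonempty := by rw [← Finset.card_pos, hBcard]; omega
  obtain ⟨a, haA⟩ := hA0
  obtain ⟨b, hbB⟩ := hB0
  have hbA : b ∉ A := fun h => hAB b h hbB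
  have H1 := hcorrect σ1 hfib1 a b
  have H2 := hcorrect σ2 hfib2 a b
  rw [hansEq] at H1
  have hσ2ab : σ2 a = σ2 b := by simp [hσ2, haA, hbA, hbB]
  have hσ1ab : σ1 a = σ1 b := H1.1 (H2.2 hσ2ab)
  have hfinal : l0 = l1 := by simpa [hσ1, haA, hbA, hbB] using hσ1ab
  exact hl01 hfinal
end

section
/- Let N' ≤ N and let a vertex u in a cluster C_u of size ≥ 8√(N log n)/(1−2p)² have its +1-degree |N⁺(u)| computed from N' independent noisy query answers (+1 w.p. 1−p in-cluster, +1 w.p. p cross-cluster). Then with probability at least 1 − 1/n⁴, |N⁺(u)| > pN' + 6√(N log n)/(1−2p); and if |C_u| ≤ 4√(N log n)/(1−2p)², then with the same probability |N⁺(u)| < pN' + 6√(N log n)/(1−2p). -/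
open Finset Real

section Hoeffding

lemma bern_D_pos {q : ℝ} (hq0 : 0 ≤ q) (hq1 : q ≤ 1) (t : ℝ) :
    0 < 1 - q + q * exp t := by
  rcases lt_or_eq_of_le hq1 with h | h
  · have : 0 ≤ q * exp t := mul_nonneg hq0 (exp_pos t).le
    linarith
  · subst h; simpa using exp_pos t

lemma hoeffding_core {q : ℝ} (hq0 : 0 ≤ q) (hq1 : q ≤ 1) (t : ℝ) :
    Real.log (1 - q + q * exp t) ≤ q * t + t ^ 2 / 8 := by
  set D : ℝ → ℝ := fun t => 1 - q + q * exp t with hD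
  have hDpos : ∀ t, 0 < D t := fun t => bern_D_pos hq0 hq1 t
  set g : ℝ → ℝ := fun t => q * t + t ^ 2 / 8 - Real.log (D t) with hg
  set g1 : ℝ → ℝ := fun t => q + t / 4 - q * exp t / D t with hg1
  set g2 : ℝ → ℝ := fun t => 1 / 4 - q * exp t * (1 - q) / (D t) ^ 2 with hg2
  have hdD : ∀ t, HasDerivAt D (q * exp t) t := by
    intro t
    exact ((Real.hasDerivAt_exp t).const_mul q).const_add (1 - q)
  have hdg : ∀ t, HasDerivAt g (g1 t) t := by
    intro t
    have h1 : HasDerivAt (fun t => q * t + t ^ 2 / 8) (q + t * 2 / 8 * 1) t := by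
      have := ((hasDerivAt_id t).const_mul q).add
        (((hasDerivAt_pow 2 t)).div_const 8)
      refine this.congr_deriv ?_
      norm_num
      ring
    have h2 : HasDerivAt (fun t => Real.log (D t)) (q * exp t / D t) t :=
      (hdD t).log (hDpos t).ne'
    have := h1.sub h2
    refine this.congr_deriv ?_
    simp only [hg1]
    ring
  have hdg1 : ∀ t, HasDerivAt g1 (g2 t) t := by
    intro t
    have h1 : HasDerivAt (fun t => q + t / 4) (1 / 4) t := by
      simpa using ((hasDerivAt_id t).div_const 4).const_add q
    have h2 : HasDerivAt (fun t => q * exp t / D t)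
        ((q * exp t * D t - q * exp t * (q * exp t)) / (D t) ^ 2) t :=
      ((Real.hasDerivAt_exp t).const_mul q).div (hdD t) (hDpos t).ne'
    have h3 := h1.sub h2
    refine h3.congr_deriv ?_
    have hne : D t ≠ 0 := (hDpos t).ne'
    simp only [hg2]
    field_simp [hg2]
    simp only [hD]
    ring
  have hg2nonneg : ∀ t, 0 ≤ g2 t := by
    intro t
    have h2 : q * exp t * (1 - q) * 4 ≤ (D t) ^ 2 := by
      simp only [hD]; nlinarith [sq_nonneg ((1 - q) - q * exp t)]
    have h3 : (0:ℝ) < (D t) ^ 2 := pow_pos (hDpos t) 2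
    simp only [hg2]
    rw [sub_nonneg, div_le_iff₀ h3]
    linarith [sq_nonneg ((1 - q) - q * exp t), h2]
  have hg1mono : Monotone g1 := monotone_of_hasDerivAt_nonneg hdg1 hg2nonneg
  have hg10 : g1 0 = 0 := by simp [hg1, hD]
  have hg0 : g 0 = 0 := by simp [hg, hD]
  have hge : 0 ≤ g t := by
    rcases le_total 0 t with h | h
    · have hmono : MonotoneOn g (Set.Ici 0) := by
        apply monotoneOn_of_hasDerivWithinAt_nonneg (convex_Ici 0)
          (fun x _ => (hdg x).continuousAt.continuousWithinAt)
          (fun x _ => (hdg x).hasDerivWithinAt)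
        intro x hx
        rw [interior_Ici] at hx
        have := hg1mono (le_of_lt hx)
        rw [hg10] at this
        exact this
      have := hmono (Set.self_mem_Ici) (Set.mem_Ici.mpr h) h
      rwa [hg0] at this
    · have hanti : AntitoneOn g (Set.Iic 0) := by
        apply antitoneOn_of_hasDerivWithinAt_nonpos (convex_Iic 0)
          (fun x _ => (hdg x).continuousAt.continuousWithinAt)
          (fun x _ => (hdg x).hasDerivWithinAt)
        intro x hx
        rw [interior_Iic] at hx
        have := hg1mono (le_of_lt hx)
        rw [hg10] at this
        exact this
      have := hanti (Set.mem_Iic.mpr h) (Set.self_mem_Iic) h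
      rwa [hg0] at this
  simp only [hg] at hge
  linarith

lemma hoeffding_mgf {q : ℝ} (hq0 : 0 ≤ q) (hq1 : q ≤ 1) (t : ℝ) :
    q * exp t + (1 - q) ≤ exp (q * t + t ^ 2 / 8) := by
  have h := hoeffding_core hq0 hq1 t
  have hD := bern_D_pos hq0 hq1 t
  calc q * exp t + (1 - q) = 1 - q + q * exp t := by ring
    _ = exp (Real.log (1 - q + q * exp t)) := (Real.exp_log hD).symm
    _ ≤ exp (q * t + t ^ 2 / 8) := Real.exp_le_exp.mpr h

end Hoeffding

section Chernoff

variable {ι : Type*} [Fintype ι] [DecidableEq ι]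

lemma bern_wt_nonneg (q : ι → ℝ) (hq0 : ∀ i, 0 ≤ q i) (hq1 : ∀ i, q i ≤ 1)
    (x : ι → Bool) : 0 ≤ ∏ i, (if x i then q i else 1 - q i) := by
  apply Finset.prod_nonneg
  intro i _
  by_cases h : x i <;> simp [h] <;> [exact hq0 i; linarith [hq1 i]]

lemma bern_sum_exp (q : ι → ℝ) (t : ℝ) :
    ∑ x : ι → Bool, (∏ i, (if x i then q i else 1 - q i)) *
      exp (t * ((Finset.univ.filter (fun i => x i = true)).card : ℝ)) =
    ∏ i, (q i * exp t + (1 - q i)) := by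
  have key : ∀ x : ι → Bool,
      (∏ i, (if x i then q i else 1 - q i)) *
        exp (t * ((Finset.univ.filter (fun i => x i = true)).card : ℝ)) =
      ∏ i, ((if x i then q i else 1 - q i) * exp (t * (if x i then 1 else 0))) := by
    intro x
    rw [Finset.prod_mul_distrib]
    congr 1
    rw [← Real.exp_sum]
    congr 1
    rw [← Finset.mul_sum]
    congr 1
    rw [Finset.sum_boole]
  simp only [key]
  have := Finset.prod_univ_sum (fun _ : ι => (Finset.univ : Finset Bool))
    (fun i b => (if b then q i else 1 - q i) * exp (t * (if b then 1 else 0)))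
  rw [Fintype.piFinset_univ] at this
  rw [← this]
  apply Finset.prod_congr rfl
  intro i _
  rw [Fintype.sum_bool]
  simp

lemma bern_sum_one (q : ι → ℝ) :
    ∑ x : ι → Bool, (∏ i, (if x i then q i else 1 - q i)) = 1 := by
  have := bern_sum_exp q 0
  simp only [zero_mul, Real.exp_zero, mul_one] at this
  rw [this]
  simp

lemma bern_chernoff (q : ι → ℝ) (hq0 : ∀ i, 0 ≤ q i) (hq1 : ∀ i, q i ≤ 1)
    (t a : ℝ) (P : (ι → Bool) → Prop) [DecidablePred P]
    (hP : ∀ x, P x → t * a ≤ t * ((Finset.univ.filter (fun i => x i = true)).card : ℝ)) :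
    ∑ x ∈ Finset.univ.filter P, (∏ i, (if x i then q i else 1 - q i)) ≤
      exp (t * ((∑ i, q i) - a) + (Fintype.card ι : ℝ) * t ^ 2 / 8) := by
  set S : (ι → Bool) → ℝ :=
    fun x => ((Finset.univ.filter (fun i => x i = true)).card : ℝ) with hS
  have step1 : ∑ x ∈ Finset.univ.filter P, (∏ i, (if x i then q i else 1 - q i)) ≤
      ∑ x ∈ Finset.univ.filter P,
        (∏ i, (if x i then q i else 1 - q i)) * exp (t * (S x - a)) := by
    apply Finset.sum_le_sum
    intro x hx
    have hx' : P x := (Finset.mem_filter.mp hx).2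
    have h1 : (1:ℝ) ≤ exp (t * (S x - a)) := by
      apply Real.one_le_exp
      have := hP x hx'
      nlinarith [this]
    nlinarith [bern_wt_nonneg q hq0 hq1 x]
  have step2 : ∑ x ∈ Finset.univ.filter P,
      (∏ i, (if x i then q i else 1 - q i)) * exp (t * (S x - a)) ≤
      ∑ x : ι → Bool, (∏ i, (if x i then q i else 1 - q i)) * exp (t * (S x - a)) := by
    apply Finset.sum_le_sum_of_subset_of_nonneg (Finset.filter_subset _ _)
    intro x _ _
    exact mul_nonneg (bern_wt_nonneg q hq0 hq1 x) (exp_pos _).le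
  have step3 : ∑ x : ι → Bool, (∏ i, (if x i then q i else 1 - q i)) * exp (t * (S x - a)) =
      exp (-(t * a)) * ∏ i, (q i * exp t + (1 - q i)) := by
    rw [← bern_sum_exp q t, Finset.mul_sum]
    apply Finset.sum_congr rfl
    intro x _
    rw [mul_sub, Real.exp_sub, Real.exp_neg]
    ring
  have step4 : ∏ i, (q i * exp t + (1 - q i)) ≤
      exp (t * (∑ i, q i) + (Fintype.card ι : ℝ) * t ^ 2 / 8) := by
    calc ∏ i, (q i * exp t + (1 - q i)) ≤ ∏ i, exp (q i * t + t ^ 2 / 8) := by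
          apply Finset.prod_le_prod
          · intro i _
            have := bern_D_pos (hq0 i) (hq1 i) t
            linarith
          · intro i _
            exact hoeffding_mgf (hq0 i) (hq1 i) t
      _ = exp (∑ i, (q i * t + t ^ 2 / 8)) := (Real.exp_sum _ _).symm
      _ = exp (t * (∑ i, q i) + (Fintype.card ι : ℝ) * t ^ 2 / 8) := by
          congr 1
          rw [Finset.sum_add_distrib, Finset.sum_const, ← Finset.sum_mul]
          simp [Finset.card_univ]
          ring
  calc ∑ x ∈ Finset.univ.filter P, (∏ i, (if x i then q i else 1 - q i)) ≤
      exp (-(t * a)) * ∏ i, (q i * exp t + (1 - q i)) := by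
        rw [← step3]; exact le_trans step1 step2
    _ ≤ exp (-(t * a)) * exp (t * (∑ i, q i) + (Fintype.card ι : ℝ) * t ^ 2 / 8) := by
        apply mul_le_mul_of_nonneg_left step4 (exp_pos _).le
    _ = exp (t * ((∑ i, q i) - a) + (Fintype.card ι : ℝ) * t ^ 2 / 8) := by
        rw [← Real.exp_add]; congr 1; ring

end Chernoff

lemma sigma_ge {s Nn L : ℝ} (hspos : 0 < s) (hssq : s^2 = Nn*L) (hL0 : 0 ≤ L)
    (h8 : 8*s ≤ Nn) : 8*L ≤ s := by
  nlinarith [mul_le_mul_of_nonneg_right h8 hL0]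

lemma arith1 {L M Nr ET s : ℝ} (hL0 : 0 ≤ L) (hMN : M ≤ Nr) (hssq : s^2 = Nr*L)
    (hs5 : 5 ≤ s) (hG : 2*s - 1 ≤ ET) : 4*L*M ≤ 2*ET^2 := by
  have h1 : (2*s-1)^2 ≤ ET^2 := by
    nlinarith [mul_nonneg (sub_nonneg.mpr hG) (show (0:ℝ) ≤ ET + (2*s-1) by linarith)]
  nlinarith [mul_le_mul_of_nonneg_left hMN (show (0:ℝ) ≤ 4*L by linarith)]

lemma arith2 {L M Nr TE s : ℝ} (hL0 : 0 ≤ L) (hMN : M ≤ Nr) (hssq : s^2 = Nr*L)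
    (hs0 : 0 ≤ s) (hG : 2*s ≤ TE) : 4*L*M ≤ 2*TE^2 := by
  have h1 : (2*s)^2 ≤ TE^2 := by
    nlinarith [mul_nonneg (sub_nonneg.mpr hG) (show (0:ℝ) ≤ TE + 2*s by linarith)]
  nlinarith [mul_le_mul_of_nonneg_left hMN (show (0:ℝ) ≤ 4*L by linarith)]

section Main

open Finset Real

set_option maxHeartbeats 1000000 in
/-- Concentration of the +1-degree: on a fully queried set of N' ≤ N vertices with
noisy answers (+1 w.p. 1−p within the cluster C of u, +1 w.p. p across clusters,
independently), if |C| ≥ 8√(N log n)/(1−2p)² then with probability at least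
1 − 1/n⁴ the +1-degree of u exceeds pN' + 6√(N log n)/(1−2p); and if
|C| ≤ 4√(N log n)/(1−2p)² then with the same probability it is below that
threshold. -/
theorem plus_degree_threshold (n N N' : ℕ) (p : ℝ) (hn : 1 ≤ n)
    (hp0 : 0 < p) (hp : p < 1/2) (hN : N' ≤ N)
    (u : Fin N') (C : Finset (Fin N')) (hu : u ∈ C) :
    ((8*Real.sqrt ((N:ℝ)*Real.log n)/(1-2*p)^2 ≤ (C.card : ℝ)) →
      1 - (((n:ℝ))^4)⁻¹ ≤
        ∑ x ∈ Finset.univ.filter (fun x : {w : Fin N' // w ≠ u} → Bool =>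
            p*(N':ℝ) + 6*Real.sqrt ((N:ℝ)*Real.log n)/(1-2*p) <
              ((Finset.univ.filter (fun w => x w = true)).card : ℝ)),
          ∏ w, (if w.1 ∈ C then (if x w then 1-p else p)
                else (if x w then p else 1-p))) ∧
    (((C.card : ℝ) ≤ 4*Real.sqrt ((N:ℝ)*Real.log n)/(1-2*p)^2) →
      1 - (((n:ℝ))^4)⁻¹ ≤
        ∑ x ∈ Finset.univ.filter (fun x : {w : Fin N' // w ≠ u} → Bool =>
            ((Finset.univ.filter (fun w => x w = true)).card : ℝ) <
              p*(N':ℝ) + 6*Real.sqrt ((N:ℝ)*Real.log n)/(1-2*p)),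
          ∏ w, (if w.1 ∈ C then (if x w then 1-p else p)
                else (if x w then p else 1-p))) := by
  have hN'pos : 0 < N' := u.pos
  set σ := Real.sqrt ((N:ℝ) * Real.log n) with hσdef
  have hσ0 : 0 ≤ σ := Real.sqrt_nonneg _
  have hL0 : 0 ≤ Real.log n := Real.log_nonneg (by exact_mod_cast hn)
  have hσsq : σ ^ 2 = (N:ℝ) * Real.log n :=
    Real.sq_sqrt (mul_nonneg (Nat.cast_nonneg N) hL0)
  have hs0 : (0:ℝ) < 1 - 2*p := by linarith
  have hs1 : 1 - 2*p < 1 := by linarith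
  set q : {w : Fin N' // w ≠ u} → ℝ := fun w => if w.1 ∈ C then 1 - p else p with hqdef
  have hq0 : ∀ i, 0 ≤ q i := by
    intro i; by_cases h : i.1 ∈ C <;> simp [hqdef, h] <;> linarith
  have hq1 : ∀ i, q i ≤ 1 := by
    intro i; by_cases h : i.1 ∈ C <;> simp [hqdef, h] <;> linarith
  have hwt : ∀ x : {w : Fin N' // w ≠ u} → Bool,
      (∏ w, (if w.1 ∈ C then (if x w then 1-p else p)
                else (if x w then p else 1-p))) =
      ∏ i, (if x i then q i else 1 - q i) := by
    intro x
    apply Finset.prod_congr rfl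
    intro w _
    by_cases h : w.1 ∈ C <;> by_cases h2 : x w <;> simp [hqdef, h, h2] <;> ring
  set Mr : ℝ := (Fintype.card {w : Fin N' // w ≠ u} : ℝ) with hMrdef
  have hMr : Mr = (N' : ℝ) - 1 := by
    have h0 : Fintype.card {w : Fin N' // w ≠ u} = N' - 1 := by
      have := Fintype.card_subtype_compl (fun w : Fin N' => w = u)
      simp only [Fintype.card_subtype_eq, Fintype.card_fin] at this
      convert this using 2
    rw [hMrdef, h0, Nat.cast_sub hN'pos, Nat.cast_one]
  set Kr : ℝ :=
    ((Finset.univ.filter (fun w : {w : Fin N' // w ≠ u} => w.1 ∈ C)).card : ℝ) with hKrdef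
  have hc1 : 1 ≤ C.card := Finset.card_pos.mpr ⟨u, hu⟩
  have hKr : Kr = (C.card : ℝ) - 1 := by
    have h1 : (Finset.univ.filter (fun w : {w : Fin N' // w ≠ u} => w.1 ∈ C)).card
        = (C.erase u).card := by
      apply Finset.card_bij (fun w _ => w.1)
      · intro a ha
        rw [Finset.mem_erase]
        exact ⟨a.2, (Finset.mem_filter.mp ha).2⟩
      · intro a _ b _ h
        exact Subtype.ext h
      · intro b hb
        rw [Finset.mem_erase] at hb
        exact ⟨⟨b, hb.1⟩, Finset.mem_filter.mpr ⟨Finset.mem_univ _, hb.2⟩, rfl⟩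
    rw [hKrdef, h1, Finset.card_erase_of_mem hu, Nat.cast_sub hc1, Nat.cast_one]
  have hq_eq : ∀ i : {w : Fin N' // w ≠ u},
      q i = p + (1-2*p) * (if i.1 ∈ C then (1:ℝ) else 0) := by
    intro i; by_cases h : i.1 ∈ C <;> simp [hqdef, h] <;> ring
  have hsum_q : (∑ i, q i) = p * Mr + (1-2*p) * Kr := by
    simp only [hq_eq]
    rw [Finset.sum_add_distrib, Finset.sum_const, ← Finset.mul_sum, Finset.sum_boole]
    simp [nsmul_eq_mul, Finset.card_univ, hMrdef, hKrdef]
    ring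
  have hcN' : (C.card : ℝ) ≤ (N' : ℝ) := by
    have := Finset.card_le_univ C
    simp only [Finset.card_univ, Fintype.card_fin] at this
    exact_mod_cast this
  have hN'N : (N' : ℝ) ≤ (N : ℝ) := by exact_mod_cast hN
  have hN'1 : (1:ℝ) ≤ (N' : ℝ) := by exact_mod_cast hN'pos
  have hc1' : (1:ℝ) ≤ (C.card : ℝ) := by exact_mod_cast hc1
  have hn1' : (1:ℝ) ≤ (n:ℝ) := by exact_mod_cast hn
  have hn4pos : (0:ℝ) < ((n:ℝ))^4 := by positivity
  have hn4 : (((n:ℝ))^4)⁻¹ = Real.exp (-(4 * Real.log n)) := by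
    rw [Real.exp_neg]
    congr 1
    have h4 : (4:ℝ) * Real.log n = Real.log (((n:ℝ))^4) := by
      rw [Real.log_pow]; push_cast; ring
    rw [h4, Real.exp_log hn4pos]
  set E : ℝ := ∑ i, q i with hEdef
  set T : ℝ := p*(N':ℝ) + 6*σ/(1-2*p) with hTdef
  have hwtnn : ∀ x : {w : Fin N' // w ≠ u} → Bool,
      0 ≤ ∏ i, (if x i then q i else 1 - q i) := bern_wt_nonneg q hq0 hq1
  constructor
  · -- Part 1
    intro h1
    have hgs : ∑ x ∈ Finset.univ.filter
          (fun x : {w : Fin N' // w ≠ u} → Bool =>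
            T < ((Finset.univ.filter (fun w => x w = true)).card : ℝ)),
        (∏ w, (if w.1 ∈ C then (if x w then 1-p else p)
                else (if x w then p else 1-p))) =
        ∑ x ∈ Finset.univ.filter
          (fun x : {w : Fin N' // w ≠ u} → Bool =>
            T < ((Finset.univ.filter (fun w => x w = true)).card : ℝ)),
        ∏ i, (if x i then q i else 1 - q i) :=
      Finset.sum_congr rfl (fun x _ => hwt x)
    rw [hgs]
    rcases eq_or_lt_of_le hn with hn1 | hn2
    · have hinv : (((n:ℝ))^4)⁻¹ = 1 := by rw [← hn1]; norm_num
      rw [hinv]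
      simp only [sub_self]
      exact Finset.sum_nonneg fun x _ => hwtnn x
    · -- n ≥ 2
      have hn2' : (2:ℝ) ≤ (n:ℝ) := by exact_mod_cast hn2
      have hlog2 : (0.6931471803:ℝ) < Real.log 2 := Real.log_two_gt_d9
      have hL2 : Real.log 2 ≤ Real.log n := Real.log_le_log (by norm_num) hn2'
      have hLpos : 0 < Real.log n := by linarith
      have hs2 : (1-2*p)^2 ≤ 1 := by nlinarith
      have hs2pos : (0:ℝ) < (1-2*p)^2 := by positivity
      rw [div_le_iff₀ hs2pos] at h1
      -- h1 : 8*σ ≤ C.card * (1-2*p)^2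
      have h8σc : 8*σ ≤ (C.card : ℝ) := by
        have := mul_le_mul_of_nonneg_left hs2 (le_trans zero_le_one hc1')
        linarith
      have hσpos : 0 < σ := by
        rw [hσdef]
        exact Real.sqrt_pos.mpr (mul_pos (by linarith) hLpos)
      have hN8σ : 8*σ ≤ (N:ℝ) := by linarith
      have hσ8L : 8 * Real.log n ≤ σ := sigma_ge hσpos hσsq hL0 hN8σ
      have hσ5 : 5 ≤ σ := by linarith
      have hMpos : 0 < Mr := by rw [hMr]; linarith
      have hMne : Mr ≠ 0 := ne_of_gt hMpos
      set R : ℝ := σ/(1-2*p) with hRdef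
      have hRs : R * (1-2*p) = σ := by rw [hRdef]; field_simp
      have hR0 : 0 ≤ R := div_nonneg hσ0 hs0.le
      have hσR : σ ≤ R := by linarith [mul_nonneg hR0 hp0.le, hRs]
      have h8R : 8 * R ≤ (1-2*p) * (C.card : ℝ) := by
        rw [← hRs] at h1
        have key : (8*R) * (1-2*p) ≤ ((1-2*p) * (C.card : ℝ)) * (1-2*p) := by
          linarith [h1]
        exact le_of_mul_le_mul_right key hs0
      have hT6R : T = p*(N':ℝ) + 6*R := by rw [hTdef, hRdef]; ring
      have hG : 2*σ - 1 ≤ E - T := by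
        rw [hsum_q, hT6R, hMr, hKr]
        linarith [h8R, hσR, hp0.le]
      have hGpos : 0 < E - T := by linarith
      set t : ℝ := -(4*(E - T)/Mr) with htdef
      have ht0 : t ≤ 0 := by
        rw [htdef]
        have : 0 ≤ 4*(E - T)/Mr := by positivity
        linarith
      have hchern := bern_chernoff q hq0 hq1 t T
        (fun x : {w : Fin N' // w ≠ u} → Bool =>
          ¬ (T < ((Finset.univ.filter (fun w => x w = true)).card : ℝ)))
        (by
          intro x hx
          rw [not_lt] at hx
          exact mul_le_mul_of_nonpos_left hx ht0)
      rw [← hEdef, ← hMrdef] at hchern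
      have hexp : t * (E - T) + Mr * t^2/8 = -(2*(E-T)^2/Mr) := by
        rw [htdef]
        field_simp
        ring
      rw [hexp] at hchern
      have hMN : Mr ≤ (N:ℝ) := by rw [hMr]; linarith
      have hbound : Real.exp (-(2*(E-T)^2/Mr)) ≤ (((n:ℝ))^4)⁻¹ := by
        rw [hn4]
        apply Real.exp_le_exp.mpr
        rw [neg_le_neg_iff, le_div_iff₀ hMpos]
        exact arith1 hL0 hMN hσsq hσ5 hG
      have hbad := le_trans hchern hbound
      have hsplit := Finset.sum_filter_add_sum_filter_not Finset.univ
        (fun x : {w : Fin N' // w ≠ u} → Bool =>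
          T < ((Finset.univ.filter (fun w => x w = true)).card : ℝ))
        (fun x => ∏ i, (if x i then q i else 1 - q i))
      rw [bern_sum_one q] at hsplit
      linarith
  · -- Part 2
    intro h2
    have hTpos : 0 < T := by
      rw [hTdef]
      have h6 : 0 ≤ 6*σ/(1-2*p) := by positivity
      have hpN : p * 1 ≤ p * (N':ℝ) := mul_le_mul_of_nonneg_left hN'1 hp0.le
      linarith
    have hbad : ∑ x ∈ Finset.univ.filter
        (fun x : {w : Fin N' // w ≠ u} → Bool =>
          ¬ (((Finset.univ.filter (fun w => x w = true)).card : ℝ) < T)),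
        (∏ i, (if x i then q i else 1 - q i)) ≤ (((n:ℝ))^4)⁻¹ := by
      rcases eq_or_lt_of_le (show (0:ℝ) ≤ Mr by rw [hMr]; linarith) with hM0 | hMpos
      · -- Mr = 0 : bad set is empty
        have hempty : Finset.univ.filter
            (fun x : {w : Fin N' // w ≠ u} → Bool =>
              ¬ (((Finset.univ.filter (fun w => x w = true)).card : ℝ) < T)) = ∅ := by
          apply Finset.filter_false_of_mem
          intro x _
          rw [not_not]
          have hcard0 : ((Finset.univ.filter
              (fun w : {w : Fin N' // w ≠ u} => x w = true)).card : ℝ) ≤ Mr := by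
            rw [hMrdef]
            exact_mod_cast Finset.card_le_univ _
          linarith
        rw [hempty, Finset.sum_empty]
        positivity
      · -- Mr > 0
        have hMne : Mr ≠ 0 := ne_of_gt hMpos
        have hs2pos : (0:ℝ) < (1-2*p)^2 := by positivity
        rw [le_div_iff₀ hs2pos] at h2
        -- h2 : C.card * (1-2*p)^2 ≤ 4*σ
        set R : ℝ := σ/(1-2*p) with hRdef
        have hRs : R * (1-2*p) = σ := by rw [hRdef]; field_simp
        have hR0 : 0 ≤ R := div_nonneg hσ0 hs0.le
        have hσR : σ ≤ R := by linarith [mul_nonneg hR0 hp0.le, hRs]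
        have h4R : (1-2*p) * (C.card : ℝ) ≤ 4 * R := by
          rw [← hRs] at h2
          have key : ((1-2*p) * (C.card : ℝ)) * (1-2*p) ≤ (4*R) * (1-2*p) := by
            linarith [h2]
          exact le_of_mul_le_mul_right key hs0
        have hT6R : T = p*(N':ℝ) + 6*R := by rw [hTdef, hRdef]; ring
        have hG : 2*σ ≤ T - E := by
          rw [hsum_q, hT6R, hMr, hKr]
          linarith [h4R, hσR, hp0.le]
        have hGpos : 0 < T - E := by
          rw [hsum_q, hT6R, hMr, hKr]
          linarith [h4R, hR0, hσ0]
        set t : ℝ := 4*(T - E)/Mr with htdef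
        have ht0 : 0 ≤ t := by positivity
        have hMN : Mr ≤ (N:ℝ) := by rw [hMr]; linarith
        have hbound : Real.exp (-(2*(T-E)^2/Mr)) ≤ (((n:ℝ))^4)⁻¹ := by
          rw [hn4]
          apply Real.exp_le_exp.mpr
          rw [neg_le_neg_iff, le_div_iff₀ hMpos]
          exact arith2 hL0 hMN hσsq hσ0 hG
        have hexp : t * (E - T) + Mr * t^2/8 = -(2*(T-E)^2/Mr) := by
          rw [htdef]
          field_simp
          ring
        have hchern := bern_chernoff q hq0 hq1 t T
          (fun x : {w : Fin N' // w ≠ u} → Bool =>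
            ¬ (((Finset.univ.filter (fun w => x w = true)).card : ℝ) < T))
          (by
            intro x hx
            rw [not_lt] at hx
            exact mul_le_mul_of_nonneg_left hx ht0)
        rw [← hEdef, ← hMrdef, hexp] at hchern
        exact le_trans hchern hbound
    have hgs : ∑ x ∈ Finset.univ.filter
          (fun x : {w : Fin N' // w ≠ u} → Bool =>
            ((Finset.univ.filter (fun w => x w = true)).card : ℝ) < T),
        (∏ w, (if w.1 ∈ C then (if x w then 1-p else p)
                else (if x w then p else 1-p))) =
        ∑ x ∈ Finset.univ.filter
          (fun x : {w : Fin N' // w ≠ u} → Bool =>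
            ((Finset.univ.filter (fun w => x w = true)).card : ℝ) < T),
        ∏ i, (if x i then q i else 1 - q i) :=
      Finset.sum_congr rfl (fun x _ => hwt x)
    rw [hgs]
    have hsplit := Finset.sum_filter_add_sum_filter_not Finset.univ
      (fun x : {w : Fin N' // w ≠ u} → Bool =>
        ((Finset.univ.filter (fun w => x w = true)).card : ℝ) < T)
      (fun x => ∏ i, (if x i then q i else 1 - q i))
    rw [bern_sum_one q] at hsplit
    linarith

end Main
end
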